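/- Let Ω ⊂ ℝ³ be a bounded domain, d > 0, and Ω_d = {x ∈ Ω : dist(x, ∂Ω) > d}. Let φ : Ω̄_d → ℝ be Lipschitz continuous with Lipschitz constant 2M, let x₀ ∈ Ω̄_d attain the maximum of |φ| over Ω̄_d, and let w : Ω → ℝ≥0 be an integrable weight function. Assume: (i) s ∫_Ω |φ(x)| w(x) dx ≤ ε for some s > 0, ε ≥ 0; (ii) ∫_{B_r(x₀)} w(x) dx ≥ η > 0 for some 0 < r ≤ d. Then |φ(x₀)| ≤ ε/(sη) + 2Mr. -/

import Mathlib

open MeasureTheory Metric Set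

/- On `B_r(x₀)` the Lipschitz bound gives `|φ| ≥ |φ(x₀)| - 2Mr`, so integrating against `w`
yields `(|φ(x₀)| - 2Mr) η ≤ ∫_{B_r(x₀)} |φ| w ≤ ∫_Ω |φ| w ≤ ε / s`. The ball lies in `Ω`
because it is connected, contains the point `x₀` of `Ω̄`, and does not meet `∂Ω`. -/

theorem le_infDist_of_mem_closure_setOf_lt {X : Type*} [MetricSpace X] {Ω F : Set X}
    {d : ℝ} {x : X} (hx : x ∈ closure {y ∈ Ω | d < infDist y F}) : d ≤ infDist x F :=
  closure_lt_subset_le continuous_const (continuous_infDist_pt F) <|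
    closure_mono (fun _ hy => hy.2) hx

theorem ball_subset_interior_of_le_infDist_frontier {E : Type*} [NormedAddCommGroup E]
    [NormedSpace ℝ E] {s : Set E} {x : E} {r : ℝ} (hx : x ∈ closure s) (hr : 0 < r)
    (hrx : r ≤ infDist x (frontier s)) : ball x r ⊆ interior s := by
  have hfrontier : ∀ z ∈ ball x r, z ∉ frontier s := fun z hz hzs =>
    (infDist_le_dist_of_mem hzs).not_gt (hrx.trans_lt' (mem_ball'.mp hz))
  have hclosure : closure (interior s) ∩ ball x r ⊆ interior s := fun z ⟨hzi, hzb⟩ => by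
    rw [← closure_sdiff_frontier]
    exact ⟨closure_mono interior_subset hzi, hfrontier z hzb⟩
  have hxi : x ∈ interior s := by
    rw [← closure_sdiff_frontier]
    exact ⟨hx, hfrontier x (mem_ball_self hr)⟩
  exact isPreconnected_ball.subset_of_closure_inter_subset isOpen_interior
    ⟨x, mem_ball_self hr, hxi⟩ hclosure

theorem mul_setIntegral_le_setIntegral_mul {α : Type*} [MeasurableSpace α] {μ : Measure α}
    {s : Set α} {f w : α → ℝ} {a : ℝ} (hs : MeasurableSet s) (hw : IntegrableOn w s μ)
    (hfw : IntegrableOn (fun x => f x * w x) s μ) (hw0 : ∀ x ∈ s, 0 ≤ w x)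
    (haf : ∀ x ∈ s, a ≤ f x) : a * ∫ x in s, w x ∂μ ≤ ∫ x in s, f x * w x ∂μ := by
  rw [← integral_const_mul]
  exact setIntegral_mono_on (hw.const_mul a) hfw hs fun x hx =>
    mul_le_mul_of_nonneg_right (haf x hx) (hw0 x hx)

theorem le_div_mul_of_mul_mul_le {a s ε η I : ℝ} (hs : 0 < s) (hε : 0 ≤ ε) (hη : 0 < η)
    (hηI : η ≤ I) (h : s * (a * I) ≤ ε) : a ≤ ε / (s * η) := by
  rcases le_or_gt a 0 with ha | ha
  · exact ha.trans (by positivity)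
  · rw [le_div_iff₀ (by positivity)]
    nlinarith [mul_le_mul_of_nonneg_left hηI ha.le]

theorem stmt2_general (Ω : Set (EuclideanSpace ℝ (Fin 3)))
    (d : ℝ)
    (φ w : EuclideanSpace ℝ (Fin 3) → ℝ) (M s ε η r : ℝ)
    (hM : 0 < M) (hs : 0 < s) (hε : 0 ≤ ε) (hη : 0 < η) (hr0 : 0 < r) (hrd : r ≤ d)
    (x₀ : EuclideanSpace ℝ (Fin 3))
    (hx₀ : x₀ ∈ closure {x ∈ Ω | d < Metric.infDist x (frontier Ω)})
    (hLip : ∀ x ∈ closure Ω, ∀ y ∈ closure Ω, |φ x - φ y| ≤ 2 * M * dist x y)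
    (hw : ∀ x, 0 ≤ w x) (hwint : IntegrableOn w Ω)
    (hφw : IntegrableOn (fun x => |φ x| * w x) Ω)
    (hupper : s * ∫ x in Ω, |φ x| * w x ≤ ε)
    (hlower : η ≤ ∫ x in Metric.ball x₀ r, w x) :
    |φ x₀| ≤ ε / (s * η) + 2 * M * r := by
  have hx₀Ω : x₀ ∈ closure Ω := closure_mono (fun _ hx => hx.1) hx₀
  have hball : ball x₀ r ⊆ Ω :=
    (ball_subset_interior_of_le_infDist_frontier hx₀Ω hr0
      (hrd.trans (le_infDist_of_mem_closure_setOf_lt hx₀))).trans interior_subset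
  have hnear : ∀ z ∈ ball x₀ r, |φ x₀| - 2 * M * r ≤ |φ z| := fun z hz => by
    have hLz := hLip x₀ hx₀Ω z (subset_closure (hball hz))
    have hdist : 2 * M * dist x₀ z ≤ 2 * M * r := by
      gcongr
      exact (mem_ball'.mp hz).le
    linarith [abs_sub_abs_le_abs_sub (φ x₀) (φ z)]
  have hball_le : ∫ x in ball x₀ r, |φ x| * w x ≤ ∫ x in Ω, |φ x| * w x :=
    setIntegral_mono_set hφw (ae_of_all _ fun x => mul_nonneg (abs_nonneg _) (hw x))
      hball.eventuallyLE
  have hweighted := mul_setIntegral_le_setIntegral_mul measurableSet_ball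
    (hwint.mono_set hball) (hφw.mono_set hball) (fun x _ => hw x) hnear
  have := le_div_mul_of_mul_mul_le hs hε hη hlower
    ((mul_le_mul_of_nonneg_left (hweighted.trans hball_le) hs.le).trans hupper)
  linarith

/-- core pointwise estimate of the abstract interior stability theorem.
If `φ` is `2M`-Lipschitz on `Ω̄`, `x₀ ∈ Ω̄_d` maximises `|φ|` over `Ω̄_d`,
`w ≥ 0` is an integrable weight with `s∫_Ω |φ|w ≤ ε` and `∫_{B_r(x₀)} w ≥ η > 0`
for some `0 < r ≤ d`, then `|φ(x₀)| ≤ ε/(sη) + 2Mr`. -/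
theorem stmt2 (Ω : Set (EuclideanSpace ℝ (Fin 3))) (hΩo : IsOpen Ω)
    (hΩb : Bornology.IsBounded Ω) (d : ℝ) (hd : 0 < d)
    (φ w : EuclideanSpace ℝ (Fin 3) → ℝ) (M s ε η r : ℝ)
    (hM : 0 < M) (hs : 0 < s) (hε : 0 ≤ ε) (hη : 0 < η) (hr0 : 0 < r) (hrd : r ≤ d)
    (x₀ : EuclideanSpace ℝ (Fin 3))
    (hx₀ : x₀ ∈ closure {x ∈ Ω | d < Metric.infDist x (frontier Ω)})
    (hmax : ∀ x ∈ closure {x ∈ Ω | d < Metric.infDist x (frontier Ω)}, |φ x| ≤ |φ x₀|)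
    (hLip : ∀ x ∈ closure Ω, ∀ y ∈ closure Ω, |φ x - φ y| ≤ 2 * M * dist x y)
    (hw : ∀ x, 0 ≤ w x) (hwint : IntegrableOn w Ω)
    (hφmeas : Measurable φ) (hwmeas : Measurable w)
    (hφw : IntegrableOn (fun x => |φ x| * w x) Ω)
    (hupper : s * ∫ x in Ω, |φ x| * w x ≤ ε)
    (hlower : η ≤ ∫ x in Metric.ball x₀ r, w x) :
    |φ x₀| ≤ ε / (s * η) + 2 * M * r :=
  stmt2_general Ω d φ w M s ε η r hM hs hε hη hr0 hrd x₀ hx₀ hLip hw hwint hφw hupper hlower
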